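/- arXiv:1406.6988 — 3 statements merged into one kernel-verified Lean document; each statement's English description precedes it below -/
import Mathlib

section
/- For real x with |x| < 2π, the series ∑_{n=0}^∞ B_{2n} x^{2n} / (2n)! converges to x/2 + x/(e^x - 1) (where the right-hand side is extended by continuity to the value 1 at x = 0). -/
/-!
Euler's formula `ζ(2k) = (-1)^(k+1) 2^(2k-1) π^(2k) B_{2k} / (2k)!` together with
`0 ≤ ζ(2k) ≤ ζ(2) < 2` gives `|B_n| / n! ≤ 4 / (2π)^n`, so `∑ B_n x^n / n!` converges absolutely
for `|x| < 2π`. Its Cauchy product with `∑ x^n / n! = e^x` has coefficients given by the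
recurrence `∑_{k ≤ n} (n choose k) B_k = B_n + [n = 1]`, whence `S e^x = S + x`, i.e.
`S = x / (e^x - 1)`. Since `B_1 = -1/2` is the only nonzero odd Bernoulli number, the even part
of the series is `S + x / 2`.
-/

open Real Finset
open scoped Nat

theorem abs_bernoulli_two_mul_div_factorial_le (k : ℕ) :
    |(bernoulli (2 * k) : ℝ)| / (2 * k)! ≤ 4 / (2 * π) ^ (2 * k) := by
  rcases k with _ | j
  · norm_num
  have hζ := hasSum_zeta_nat j.succ_ne_zero
  set ζ := (-1 : ℝ) ^ (j + 1 + 1) * 2 ^ (2 * (j + 1) - 1) * π ^ (2 * (j + 1)) *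
    bernoulli (2 * (j + 1)) / (2 * (j + 1))!
  have hζ_nonneg : 0 ≤ ζ := hasSum_le (fun n => by positivity) hasSum_zero hζ
  have hζ_le : ζ ≤ π ^ 2 / 6 := by
    refine hasSum_le (fun n => ?_) hζ hasSum_zeta_two
    rcases n.eq_zero_or_pos with rfl | hn
    · simp
    · gcongr
      · exact_mod_cast hn
      · omega
  have h_abs : (2 * π) ^ (2 * (j + 1)) * (|(bernoulli (2 * (j + 1)) : ℝ)| / (2 * (j + 1))!) =
      2 * |ζ| := by
    simp only [ζ, show 2 * (j + 1) - 1 = 2 * j + 1 by omega, abs_div, abs_mul, abs_pow, abs_neg,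
      abs_one, one_pow, Nat.abs_cast, abs_two, abs_of_pos pi_pos]
    ring
  rw [le_div_iff₀ (by positivity), mul_comm, h_abs, abs_of_nonneg hζ_nonneg]
  nlinarith [pi_lt_d2, pi_pos]

theorem abs_bernoulli_div_factorial_le (n : ℕ) :
    |(bernoulli n : ℝ)| / n ! ≤ 4 / (2 * π) ^ n := by
  obtain ⟨k, rfl | rfl⟩ := n.even_or_odd'
  · exact abs_bernoulli_two_mul_div_factorial_le k
  rcases k.eq_zero_or_pos with rfl | hk
  · rw [le_div_iff₀ (by positivity)]
    norm_num [bernoulli_one]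
    linarith [pi_le_four]
  · rw [bernoulli_eq_bernoulli'_of_ne_one (by omega),
      bernoulli'_eq_zero_of_odd (odd_two_mul_add_one k) (by omega)]
    simp only [Rat.cast_zero, abs_zero, zero_div]
    positivity

theorem norm_bernoulli_mul_pow_div_factorial_le (x : ℝ) (n : ℕ) :
    ‖(bernoulli n : ℝ) * x ^ n / (n ! : ℝ)‖ ≤ 4 * (|x| / (2 * π)) ^ n := calc
  ‖(bernoulli n : ℝ) * x ^ n / (n ! : ℝ)‖ = |(bernoulli n : ℝ)| / n ! * |x| ^ n := by
    rw [Real.norm_eq_abs, abs_div, abs_mul, abs_pow, Nat.abs_cast]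
    ring
  _ ≤ 4 / (2 * π) ^ n * |x| ^ n := by
    gcongr ?_ * _
    exact abs_bernoulli_div_factorial_le n
  _ = 4 * (|x| / (2 * π)) ^ n := by rw [div_pow]; ring

theorem summable_norm_bernoulli_mul_pow_div_factorial {x : ℝ} (hx : |x| < 2 * π) :
    Summable fun n => ‖(bernoulli n : ℝ) * x ^ n / (n ! : ℝ)‖ :=
  .of_nonneg_of_le (fun _ => norm_nonneg _) (norm_bernoulli_mul_pow_div_factorial_le x)
    ((summable_geometric_of_lt_one (by positivity) ((div_lt_one (by positivity)).mpr hx)).mul_left 4)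

theorem sum_range_bernoulli_mul_pow_div_factorial_mul_exp_coeff {K : Type*} [Field K] [CharZero K]
    (x : K) (n : ℕ) :
    ∑ k ∈ range (n + 1), (bernoulli k : K) * x ^ k / k ! * (x ^ (n - k) / (n - k)!) =
      (bernoulli n : K) * x ^ n / n ! + if n = 1 then x else 0 := by
  have h_term : ∀ k ∈ range (n + 1), (bernoulli k : K) * x ^ k / k ! * (x ^ (n - k) / (n - k)!) =
      x ^ n / n ! * ((n.choose k * bernoulli k : ℚ) : K) := by
    intro k hk
    have hkn : k ≤ n := Nat.lt_succ_iff.mp (mem_range.mp hk)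
    push_cast
    rw [Nat.cast_choose K hkn, ← pow_mul_pow_sub x hkn]
    field_simp
    exact (mul_div_mul_right _ _ (Nat.cast_ne_zero.mpr n.factorial_ne_zero)).symm
  rw [sum_congr rfl h_term, ← mul_sum, ← Rat.cast_sum, sum_range_succ, sum_bernoulli,
    Nat.choose_self]
  split_ifs with hn
  · subst hn; push_cast; ring
  · push_cast; ring

theorem tsum_bernoulli_mul_pow_div_factorial_mul_exp_sub_one {x : ℝ} (hx : |x| < 2 * π) :
    (∑' n, (bernoulli n : ℝ) * x ^ n / n !) * (exp x - 1) = x := by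
  have h_exp : HasSum (fun n => x ^ n / n !) (exp x) := by
    rw [exp_eq_exp_ℝ]; exact NormedSpace.expSeries_div_hasSum_exp x
  have h_norm_exp : Summable fun n => ‖x ^ n / (n ! : ℝ)‖ := by
    simpa [abs_div, abs_pow] using summable_pow_div_factorial |x|
  have h_norm := summable_norm_bernoulli_mul_pow_div_factorial hx
  have h_cauchy := hasSum_sum_range_mul_of_summable_norm h_norm h_norm_exp
  simp only [sum_range_bernoulli_mul_pow_div_factorial_mul_exp_coeff, h_exp.tsum_eq] at h_cauchy
  have h_shift := h_norm.of_norm.hasSum.add (hasSum_ite_eq 1 x)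
  linear_combination h_cauchy.unique h_shift

theorem hasSum_bernoulli_mul_pow_div_factorial {x : ℝ} (hx : |x| < 2 * π) (hx₀ : x ≠ 0) :
    HasSum (fun n => (bernoulli n : ℝ) * x ^ n / n !) (x / (exp x - 1)) := by
  have h_ne : exp x - 1 ≠ 0 := sub_ne_zero.mpr (exp_eq_one_iff x |>.not.mpr hx₀)
  rw [← eq_div_of_mul_eq h_ne (tsum_bernoulli_mul_pow_div_factorial_mul_exp_sub_one hx)]
  exact (summable_norm_bernoulli_mul_pow_div_factorial hx).of_norm.hasSum

theorem hasSum_bernoulli_odd_mul_pow_div_factorial {K : Type*} [Field K] [CharZero K]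
    [TopologicalSpace K] (x : K) :
    HasSum (fun k => (bernoulli (2 * k + 1) : K) * x ^ (2 * k + 1) / (2 * k + 1)!) (-x / 2) := by
  convert hasSum_single 0 fun k hk => ?_ using 1
  · simp [bernoulli_one]; ring
  · rw [bernoulli_eq_bernoulli'_of_ne_one (by omega),
      bernoulli'_eq_zero_of_odd (odd_two_mul_add_one k) (by omega)]
    simp

theorem bernoulli_even_generating_function (x : ℝ) (hx : |x| < 2 * Real.pi) :
    HasSum (fun n : ℕ => (bernoulli (2 * n) : ℝ) * x ^ (2 * n) / (Nat.factorial (2 * n) : ℝ))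
      (if x = 0 then 1 else x / 2 + x / (Real.exp x - 1)) := by
  split_ifs with hx₀
  · subst hx₀
    convert hasSum_single (f := fun n : ℕ => (bernoulli (2 * n) : ℝ) * 0 ^ (2 * n) / (2 * n)!) 0
      fun n hn => by simp [hn]
    simp
  have h_all := hasSum_bernoulli_mul_pow_div_factorial hx hx₀
  have h_odd := hasSum_bernoulli_odd_mul_pow_div_factorial x
  have h_even : Summable fun k => (bernoulli (2 * k) : ℝ) * x ^ (2 * k) / (2 * k)! :=
    h_all.summable.comp_injective (mul_right_injective₀ two_ne_zero)
  have h_split := HasSum.even_add_odd (f := fun n => (bernoulli n : ℝ) * x ^ n / n !)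
    h_even.hasSum h_odd
  convert h_even.hasSum using 1
  linear_combination h_all.unique h_split
end

section
/- (Hadamard's lemma for matrices) For X, Y ∈ ℝ^{d×d}, the conjugation e^X Y e^{-X} equals the convergent series ∑_{n=0}^∞ {X,Y}_n / n!, where {X,Y}_n is the n-fold iterated commutator. -/
open Matrix NormedSpace

attribute [local instance] Matrix.linftyOpNormedRing Matrix.linftyOpNormedAlgebra

/-- The iterated commutator `{X,Y}ₙ`. -/
def itComm {d : ℕ} (X : Matrix (Fin d) (Fin d) ℝ) : Matrix (Fin d) (Fin d) ℝ → ℕ →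
    Matrix (Fin d) (Fin d) ℝ
  | Y, 0 => Y
  | Y, n + 1 => X * itComm X Y n - itComm X Y n * X

/-! Write `ad a = L a - R a` with `L a = (a * ·)` and `R a = (· * a)`, continuous linear operators
on the Banach algebra. Left and right multiplications commute, so
`exp (ad a) = exp (L a) * exp (R (-a))`, and `exp (L a) = L (exp a)`, `exp (R a) = R (exp a)`
by comparing exponential series. Hence `exp (ad a) b = exp a * b * exp (-a)`, and expanding the
left side as a power series in `ad a` gives the series of iterated commutators. -/

open scoped Nat

attribute [local instance] LieRing.ofAssociativeRing

section

variable {𝕂 𝔸 : Type*} [RCLike 𝕂] [NormedRing 𝔸] [NormedAlgebra 𝕂 𝔸]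

namespace ContinuousLinearMap

theorem hasSum_exp_apply {E : Type*} [NormedAddCommGroup E] [NormedSpace 𝕂 E] [CompleteSpace E]
    (T : E →L[𝕂] E) (v : E) : HasSum (fun n => (n !⁻¹ : 𝕂) • (T ^ n) v) (exp T v) := by
  simpa using (exp_series_hasSum_exp' (𝕂 := 𝕂) T).mapL (apply 𝕂 E v)

variable (𝕂)

theorem mul_pow_apply (a b : 𝔸) (n : ℕ) : (mul 𝕂 𝔸 a ^ n) b = a ^ n * b := by
  induction n with
  | zero => simp
  | succ n ih => rw [pow_succ', mul_apply_eq_comp, ih, mul_apply', pow_succ', mul_assoc]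

theorem flip_mul_pow_apply (a b : 𝔸) (n : ℕ) : ((mul 𝕂 𝔸).flip a ^ n) b = b * a ^ n := by
  induction n with
  | zero => simp
  | succ n ih => rw [pow_succ', mul_apply_eq_comp, ih, flip_apply, mul_apply', pow_succ, mul_assoc]

theorem commute_mul_flip_mul (a b : 𝔸) : Commute (mul 𝕂 𝔸 a) ((mul 𝕂 𝔸).flip b) := by
  ext c
  simp [mul_assoc]

variable [CompleteSpace 𝔸]

theorem exp_mul_apply (a b : 𝔸) : exp (mul 𝕂 𝔸 a) b = exp a * b := by
  refine (hasSum_exp_apply _ b).unique ?_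
  simpa only [mul_pow_apply, smul_mul_assoc] using (exp_series_hasSum_exp' (𝕂 := 𝕂) a).mul_right b

theorem exp_flip_mul_apply (a b : 𝔸) : exp ((mul 𝕂 𝔸).flip a) b = b * exp a := by
  refine (hasSum_exp_apply _ b).unique ?_
  simpa only [flip_mul_pow_apply, mul_smul_comm] using
    (exp_series_hasSum_exp' (𝕂 := 𝕂) a).mul_left b

theorem exp_mul_sub_flip_mul_apply (a b : 𝔸) :
    exp (mul 𝕂 𝔸 a - (mul 𝕂 𝔸).flip a) b = exp a * b * exp (-a) := by
  -- `exp_add_of_commute` is stated for normed `ℚ`-algebras.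
  let +nondep : NormedAlgebra ℚ (𝔸 →L[𝕂] 𝔸) := .restrictScalars ℚ 𝕂 _
  rw [sub_eq_add_neg, exp_add_of_commute (commute_mul_flip_mul 𝕂 a a).neg_right, ← map_neg,
    mul_apply_eq_comp, exp_flip_mul_apply, exp_mul_apply, mul_assoc]

end ContinuousLinearMap

namespace LieAlgebra

open ContinuousLinearMap

variable (𝕂)

theorem ad_eq_mul_sub_flip_mul (a : 𝔸) :
    ad 𝕂 𝔸 a = ((mul 𝕂 𝔸 a - (mul 𝕂 𝔸).flip a : 𝔸 →L[𝕂] 𝔸) : Module.End 𝕂 𝔸) := by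
  ext b
  simp [Ring.lie_def]

theorem hasSum_ad_pow_apply [CompleteSpace 𝔸] (a b : 𝔸) :
    HasSum (fun n => (n !⁻¹ : 𝕂) • (ad 𝕂 𝔸 a ^ n) b) (exp a * b * exp (-a)) := by
  rw [ad_eq_mul_sub_flip_mul, ← exp_mul_sub_flip_mul_apply 𝕂]
  simpa only [← toLinearMap_pow, coe_coe] using hasSum_exp_apply _ b

end LieAlgebra

end

theorem itComm_eq_ad_pow_apply {d : ℕ} (X Y : Matrix (Fin d) (Fin d) ℝ) (n : ℕ) :
    itComm X Y n = (LieAlgebra.ad ℝ _ X ^ n) Y := by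
  induction n with
  | zero => rfl
  | succ n ih =>
    rw [pow_succ', Module.End.mul_apply, ← ih, LieAlgebra.ad_apply, Ring.lie_def, itComm]

theorem hadamard_lemma {d : ℕ} (X Y : Matrix (Fin d) (Fin d) ℝ) :
    HasSum (fun n : ℕ => ((Nat.factorial n : ℝ))⁻¹ • itComm X Y n)
      (NormedSpace.exp X * Y * NormedSpace.exp (-X)) := by
  simp only [itComm_eq_ad_pow_apply]
  exact LieAlgebra.hasSum_ad_pow_apply ℝ X Y
end

section
/- (Wilcox's formula) For a differentiable matrix-valued function X : ℝ → ℝ^{d×d}, the derivative of the matrix exponential satisfies d/dt e^{X(t)} = ∫_0^1 e^{(1-α)X(t)} X'(t) e^{αX(t)} dα. -/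
open Matrix NormedSpace

attribute [local instance] Matrix.linftyOpNormedRing Matrix.linftyOpNormedAlgebra

/-!
Differentiating `α ↦ exp ((1 - α) • B) * exp (α • A)` over `[0, 1]` gives the exact identity
`exp A - exp B = ∫₀¹ exp ((1 - α) • B) * (A - B) * exp (α • A)`. Dividing by `s - t` with
`A = X s`, `B = X t` writes the difference quotient of `exp ∘ X` as this integral evaluated at
`(slope X t s, X s)`; the integral is jointly continuous in these two arguments, so the difference
quotient tends to its value at `(X' t, X t)`.
-/

section

variable {𝔸 : Type*} [NormedRing 𝔸] [NormedAlgebra ℝ 𝔸] [CompleteSpace 𝔸]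

@[fun_prop]
theorem continuous_exp_of_normedAlgebra_real : Continuous (exp : 𝔸 → 𝔸) :=
  continuous_iff_continuousAt.2 fun A => (exp_analytic (𝕂 := ℝ) A).continuousAt

theorem hasDerivAt_exp_smul_mul_exp_smul (A B : 𝔸) (α : ℝ) :
    HasDerivAt (fun α : ℝ => exp ((1 - α) • B) * exp (α • A))
      (exp ((1 - α) • B) * (A - B) * exp (α • A)) α := by
  have hB : HasDerivAt (fun α : ℝ => exp ((1 - α) • B)) (-(B * exp ((1 - α) • B))) α := by
    simpa [Function.comp_def] using
      (hasDerivAt_exp_smul_const' B (1 - α)).scomp α ((hasDerivAt_id α).const_sub 1)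
  refine (hB.mul (hasDerivAt_exp_smul_const' A α)).congr_deriv ?_
  rw [(((Commute.refl B).smul_right (1 - α)).exp_right).eq]
  noncomm_ring

theorem exp_sub_exp_eq_integral (A B : 𝔸) :
    exp A - exp B = ∫ α in (0 : ℝ)..1, exp ((1 - α) • B) * (A - B) * exp (α • A) := by
  rw [intervalIntegral.integral_eq_sub_of_hasDerivAt
    (fun α _ => hasDerivAt_exp_smul_mul_exp_smul A B α)
    (Continuous.intervalIntegrable (by fun_prop) _ _)]
  simp

theorem continuous_integral_exp_smul_mul_mul_exp_smul (B : 𝔸) :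
    Continuous fun p : 𝔸 × 𝔸 => ∫ α in (0 : ℝ)..1, exp ((1 - α) • B) * p.1 * exp (α • p.2) :=
  intervalIntegral.continuous_parametric_intervalIntegral_of_continuous' (by fun_prop) 0 1

theorem slope_exp_comp_eq_integral (X : ℝ → 𝔸) (t s : ℝ) :
    slope (fun s => exp (X s)) t s =
      ∫ α in (0 : ℝ)..1, exp ((1 - α) • X t) * slope X t s * exp (α • X s) := by
  simp_rw [slope_def_module, exp_sub_exp_eq_integral (X s) (X t), ← intervalIntegral.integral_smul,
    mul_smul_comm, smul_mul_assoc]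

open Filter Topology in
theorem hasDerivAt_exp_comp_eq_integral {X : ℝ → 𝔸} {X' : 𝔸} {t : ℝ} (hX : HasDerivAt X X' t) :
    HasDerivAt (fun s => exp (X s))
      (∫ α in (0 : ℝ)..1, exp ((1 - α) • X t) * X' * exp (α • X t)) t := by
  have hslope : Tendsto (slope X t) (𝓝[≠] t) (𝓝 X') := hasDerivAt_iff_tendsto_slope.mp hX
  have hXs : Tendsto X (𝓝[≠] t) (𝓝 (X t)) :=
    hX.continuousAt.tendsto.mono_left nhdsWithin_le_nhds
  refine hasDerivAt_iff_tendsto_slope.mpr ?_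
  rw [funext (slope_exp_comp_eq_integral X t)]
  exact ((continuous_integral_exp_smul_mul_mul_exp_smul (X t)).tendsto (X', X t)).comp
    (hslope.prodMk_nhds hXs)

end

theorem wilcox_formula_general {d : ℕ} (X X' : ℝ → Matrix (Fin d) (Fin d) ℝ)
    (hX : ∀ t, HasDerivAt X (X' t) t) (t : ℝ) :
    HasDerivAt (fun s => NormedSpace.exp (X s))
      (∫ α in (0:ℝ)..1, NormedSpace.exp ((1 - α) • X t) * X' t * NormedSpace.exp (α • X t)) t :=
  hasDerivAt_exp_comp_eq_integral (hX t)

theorem wilcox_formula {d : ℕ} (X X' : ℝ → Matrix (Fin d) (Fin d) ℝ)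
    (hX : ∀ t, HasDerivAt X (X' t) t) (hX' : Continuous X') (t : ℝ) :
    HasDerivAt (fun s => NormedSpace.exp (X s))
      (∫ α in (0:ℝ)..1, NormedSpace.exp ((1 - α) • X t) * X' t * NormedSpace.exp (α • X t)) t :=
  wilcox_formula_general X X' hX t
end
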